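/- arXiv:0707.0077 — 9 statements merged into one kernel-verified Lean document; each statement's English description precedes it below -/
import Mathlib

section
/- For every integer n ≥ 1 and every real α ≥ 1, one has (α/(α+1)) · n^α (n+1)^α / ((n+1)^α − n^α) ≤ ∑_{i=1}^n i^α. -/
/-!
By induction on `n` it suffices that the bound grows by at most `(n + 1) ^ α` from `n` to `n + 1`.
With `A, B, C` the `α`-th powers of `n, n + 1, n + 2` this increment inequality is
`(α + 1) B² + (1 - α) A C ≤ B (A + C)`, and dividing by `(n + 1) ^ (2α)` it becomes
`α + 1 ≤ (1 + x) ^ α + (1 - x) ^ α + (α - 1) (1 - x²) ^ α` for `x = 1 / (n + 1) ∈ [0, 1]`.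
The right side equals `α + 1` at `x = 0` and is monotone: with `β = α - 1` its derivative is
`α ((1 + x) ^ β - (1 - x) ^ β - 2 β x (1 - x²) ^ β)`, and this bracket is again nonnegative
because it vanishes at `0` and its derivative is nonnegative by AM-GM.
-/

open Real Set

lemma le_of_hasDerivAt_nonneg_of_mem_Icc {f f' : ℝ → ℝ} {a b x : ℝ}
    (hf : ContinuousOn f (Icc a b)) (hf' : ∀ y ∈ Ioo a b, HasDerivAt f (f' y) y)
    (hf'₀ : ∀ y ∈ Ioo a b, 0 ≤ f' y) (hx : x ∈ Icc a b) : f a ≤ f x := by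
  have hmono : MonotoneOn f (Icc a b) :=
    monotoneOn_of_hasDerivWithinAt_nonneg (convex_Icc a b) hf
      (by simpa using fun y hy => (hf' y hy).hasDerivWithinAt) (by simpa using hf'₀)
  exact hmono (left_mem_Icc.2 (hx.1.trans hx.2)) hx hx.1

lemma two_mul_one_sub_sq_rpow_le_add {β x : ℝ} (hβ : -1 ≤ β) (hx₀ : -1 < x) (hx₁ : x < 1) :
    2 * (1 - x ^ 2) ^ β ≤ (1 + x) ^ (β - 1) + (1 - x) ^ (β - 1) := by
  have h₁ : 0 < 1 + x := by linarith
  have h₂ : 0 < 1 - x := by linarith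
  have hsq_rpow : ∀ {t : ℝ}, 0 < t → t ^ (β - 1) = (t ^ ((β - 1) / 2)) ^ 2 := fun ht => by
    rw [← rpow_natCast, ← rpow_mul ht.le]; norm_num
  have hmul : (1 + x) ^ ((β - 1) / 2) * (1 - x) ^ ((β - 1) / 2) = (1 - x ^ 2) ^ ((β - 1) / 2) := by
    rw [← mul_rpow h₁.le h₂.le]; ring_nf
  have hexp : (1 - x ^ 2) ^ β ≤ (1 - x ^ 2) ^ ((β - 1) / 2) :=
    rpow_le_rpow_of_exponent_ge (by nlinarith) (by nlinarith) (by linarith)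
  rw [hsq_rpow h₁, hsq_rpow h₂]
  nlinarith [sq_nonneg ((1 + x) ^ ((β - 1) / 2) - (1 - x) ^ ((β - 1) / 2))]

lemma two_mul_mul_one_sub_sq_rpow_le_sub {β x : ℝ} (hβ : 0 ≤ β) (hx₀ : 0 ≤ x) (hx₁ : x ≤ 1) :
    2 * β * x * (1 - x ^ 2) ^ β ≤ (1 + x) ^ β - (1 - x) ^ β := by
  let ψ : ℝ → ℝ := fun y => (1 + y) ^ β - (1 - y) ^ β - 2 * β * y * (1 - y ^ 2) ^ β
  let ψ' : ℝ → ℝ := fun y => β * ((1 + y) ^ (β - 1) + (1 - y) ^ (β - 1) - 2 * (1 - y ^ 2) ^ β)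
    + 4 * β ^ 2 * y ^ 2 * (1 - y ^ 2) ^ (β - 1)
  have hcont : Continuous ψ := by fun_prop (disch := exact fun _ => Or.inr hβ)
  have hderiv : ∀ y ∈ Ioo (0 : ℝ) 1, HasDerivAt ψ (ψ' y) y := by
    rintro y ⟨hy₀, hy₁⟩
    have d₁ := ((hasDerivAt_id' y).const_add 1).rpow_const (p := β) (Or.inl (by linarith))
    have d₂ := ((hasDerivAt_id' y).const_sub 1).rpow_const (p := β) (Or.inl (by linarith))
    have d₃ := ((hasDerivAt_pow 2 y).const_sub 1).rpow_const (p := β) (Or.inl (by nlinarith))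
    exact ((d₁.sub d₂).sub (((hasDerivAt_id' y).const_mul (2 * β)).mul d₃)).congr_deriv
      (by simp only [ψ']; ring_nf)
  have hderiv₀ : ∀ y ∈ Ioo (0 : ℝ) 1, 0 ≤ ψ' y := by
    rintro y ⟨hy₀, hy₁⟩
    have hamgm := two_mul_one_sub_sq_rpow_le_add (by linarith : -1 ≤ β) (by linarith) hy₁
    have : 0 ≤ (1 - y ^ 2) ^ (β - 1) := rpow_nonneg (by nlinarith) _
    exact add_nonneg (mul_nonneg hβ (by linarith)) (by positivity)
  simpa [ψ] using le_of_hasDerivAt_nonneg_of_mem_Icc hcont.continuousOn hderiv hderiv₀ ⟨hx₀, hx₁⟩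

lemma add_one_le_rpow_add_rpow_add_mul_one_sub_sq_rpow {α x : ℝ} (hα : 1 ≤ α) (hx₀ : 0 ≤ x)
    (hx₁ : x ≤ 1) : α + 1 ≤ (1 + x) ^ α + (1 - x) ^ α + (α - 1) * (1 - x ^ 2) ^ α := by
  let g : ℝ → ℝ := fun y => (1 + y) ^ α + (1 - y) ^ α + (α - 1) * (1 - y ^ 2) ^ α
  let g' : ℝ → ℝ := fun y =>
    α * ((1 + y) ^ (α - 1) - (1 - y) ^ (α - 1) - 2 * (α - 1) * y * (1 - y ^ 2) ^ (α - 1))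
  have hα₀ : 0 ≤ α := by linarith
  have hcont : Continuous g := by fun_prop (disch := exact fun _ => Or.inr hα₀)
  have hderiv : ∀ y ∈ Ioo (0 : ℝ) 1, HasDerivAt g (g' y) y := by
    rintro y ⟨hy₀, hy₁⟩
    have d₁ := ((hasDerivAt_id' y).const_add 1).rpow_const (p := α) (Or.inl (by linarith))
    have d₂ := ((hasDerivAt_id' y).const_sub 1).rpow_const (p := α) (Or.inl (by linarith))
    have d₃ := ((hasDerivAt_pow 2 y).const_sub 1).rpow_const (p := α) (Or.inl (by nlinarith))
    exact ((d₁.add d₂).add (d₃.const_mul (α - 1))).congr_deriv (by simp only [g']; ring_nf)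
  have hderiv₀ : ∀ y ∈ Ioo (0 : ℝ) 1, 0 ≤ g' y := fun y hy =>
    mul_nonneg hα₀ (sub_nonneg.2
      (two_mul_mul_one_sub_sq_rpow_le_sub (by linarith) hy.1.le hy.2.le))
  have hg₀ : g 0 = α + 1 := by norm_num [g]; ring
  exact hg₀.symm.trans_le
    (le_of_hasDerivAt_nonneg_of_mem_Icc hcont.continuousOn hderiv hderiv₀ ⟨hx₀, hx₁⟩)

lemma add_one_mul_rpow_sq_add_le {α m y : ℝ} (hα : 1 ≤ α) (hm : 0 < m) (hy₀ : 0 ≤ y)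
    (hym : y ≤ m) :
    (α + 1) * (m ^ α) ^ 2 + (1 - α) * ((m - y) ^ α * (m + y) ^ α)
      ≤ m ^ α * ((m - y) ^ α + (m + y) ^ α) := by
  set x := y / m
  have hx₀ : 0 ≤ x := div_nonneg hy₀ hm.le
  have hx₁ : x ≤ 1 := (div_le_one hm).2 hym
  have hsub : (m - y) ^ α = m ^ α * (1 - x) ^ α := by
    rw [← mul_rpow hm.le (by linarith)]; congr 1; simp only [x]; field_simp
  have hadd : (m + y) ^ α = m ^ α * (1 + x) ^ α := by
    rw [← mul_rpow hm.le (by linarith)]; congr 1; simp only [x]; field_simp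
  have hprod : (1 - x) ^ α * (1 + x) ^ α = (1 - x ^ 2) ^ α := by
    rw [← mul_rpow (by linarith) (by linarith)]; ring_nf
  have hg := add_one_le_rpow_add_rpow_add_mul_one_sub_sq_rpow hα hx₀ hx₁
  rw [hsub, hadd]
  rw [← hprod] at hg
  nlinarith [mul_le_mul_of_nonneg_left hg (sq_nonneg (m ^ α))]

noncomputable def powerSumBound (α a : ℝ) : ℝ :=
  α / (α + 1) * (a ^ α * (a + 1) ^ α / ((a + 1) ^ α - a ^ α))

lemma powerSumBound_zero {α : ℝ} (hα : α ≠ 0) : powerSumBound α 0 = 0 := by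
  simp [powerSumBound, zero_rpow hα]

lemma powerSumBound_add_one_le {α a : ℝ} (hα : 1 ≤ α) (ha : 0 ≤ a) :
    powerSumBound α (a + 1) ≤ powerSumBound α a + (a + 1) ^ α := by
  have key := add_one_mul_rpow_sq_add_le hα (by linarith : 0 < a + 1) zero_le_one
    (by linarith : (1 : ℝ) ≤ a + 1)
  rw [add_sub_cancel_right] at key
  set A := a ^ α
  set B := (a + 1) ^ α
  set C := (a + 1 + 1) ^ α
  have hA : 0 ≤ A := rpow_nonneg ha α
  have hAB : A < B := rpow_lt_rpow ha (by linarith) (by linarith)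
  have hBC : B < C := rpow_lt_rpow (by linarith) (by linarith) (by linarith)
  have hα₁ : 0 < α + 1 := by linarith
  unfold powerSumBound
  rw [div_mul_div_comm, div_mul_div_comm, div_add' _ _ _ (by positivity),
    div_le_div_iff₀ (by nlinarith) (by nlinarith)]
  nlinarith [mul_nonneg (mul_nonneg hα₁.le (hA.trans hAB.le)) (sub_nonneg.2 key),
    mul_pos (sub_pos.2 hAB) (sub_pos.2 hBC)]

theorem power_sum_lower_bound_general (n : ℕ) (α : ℝ) (hα : 1 ≤ α) :
    α / (α + 1) * ((n : ℝ) ^ α * ((n : ℝ) + 1) ^ α / (((n : ℝ) + 1) ^ α - (n : ℝ) ^ α))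
      ≤ ∑ i ∈ Finset.Icc 1 n, (i : ℝ) ^ α := by
  change powerSumBound α n ≤ _
  induction n with
  | zero => simp [powerSumBound_zero (zero_lt_one.trans_le hα).ne']
  | succ n ih =>
    rw [Finset.sum_Icc_succ_top (Nat.le_add_left 1 n), Nat.cast_succ]
    linarith [powerSumBound_add_one_le hα n.cast_nonneg]

theorem power_sum_lower_bound (n : ℕ) (hn : 1 ≤ n) (α : ℝ) (hα : 1 ≤ α) :
    α / (α + 1) * ((n : ℝ) ^ α * ((n : ℝ) + 1) ^ α / (((n : ℝ) + 1) ^ α - (n : ℝ) ^ α))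
      ≤ ∑ i ∈ Finset.Icc 1 n, (i : ℝ) ^ α :=
  power_sum_lower_bound_general n α hα
end

section
/- For every real α ≥ 1 and integer n ≥ 1, ∑_{i=1}^n i^α ≤ n(n+1)^{2α} / ((n+1)(n+2)^α − n(n+1)^α). -/
open Real Finset

lemma convex_rpow_comb (α : ℝ) (hα : 1 ≤ α) {a b l : ℝ} (ha : 0 ≤ a) (hb : 0 ≤ b)
    (hl : 0 ≤ l) (hl1 : l ≤ 1) :
    (l * a + (1 - l) * b) ^ α ≤ l * a ^ α + (1 - l) * b ^ α := by
  have h := (convexOn_rpow hα).2 (Set.mem_Ici.2 ha) (Set.mem_Ici.2 hb) hl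
    (by linarith : (0:ℝ) ≤ 1 - l) (by ring)
  simpa [smul_eq_mul] using h

lemma step_ineq (α : ℝ) (hα : 1 ≤ α) (x : ℝ) (hx : 0 ≤ x) :
    (x + 2) * ((x + 1) * (x + 3)) ^ α
      ≤ (x + 1) * ((x + 2) ^ 2) ^ α + ((x + 1) * (x + 2)) ^ α := by
  have h2 : (0:ℝ) < x + 2 := by linarith
  have hl : (0:ℝ) ≤ 1 / (x + 2) := by positivity
  have hl1 : 1 / (x + 2) ≤ 1 := by rw [div_le_one h2]; linarith
  have key := convex_rpow_comb α hα (a := (x+1)*(x+2)) (b := (x+2)^2)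
      (by nlinarith) (by positivity) hl hl1
  have e1 : 1/(x+2) * ((x+1)*(x+2)) + (1 - 1/(x+2)) * (x+2)^2 = (x+1)*(x+3) := by
    field_simp; ring
  rw [e1] at key
  have h := mul_le_mul_of_nonneg_left key h2.le
  have e2 : (x+2) * (1/(x+2) * ((x+1)*(x+2))^α + (1 - 1/(x+2))*((x+2)^2)^α)
      = (x+1)*((x+2)^2)^α + ((x+1)*(x+2))^α := by
    field_simp; ring
  linarith [e2 ▸ h]

lemma denom_pos (α : ℝ) (hα : 1 ≤ α) (n : ℕ) :
    0 < ((n:ℝ) + 1) * ((n:ℝ) + 2) ^ α - (n:ℝ) * ((n:ℝ) + 1) ^ α := by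
  have h1 : ((n:ℝ)+1)^α ≤ ((n:ℝ)+2)^α :=
    Real.rpow_le_rpow (by positivity) (by linarith) (by linarith)
  have h2 : 0 < ((n:ℝ)+1)^α := Real.rpow_pos_of_pos (by positivity) α
  have h3 : (0:ℝ) ≤ (n:ℝ) := n.cast_nonneg
  nlinarith [mul_le_mul_of_nonneg_left h1 (by positivity : (0:ℝ) ≤ (n:ℝ)+1)]

theorem bennett_power_sum_inequality (α : ℝ) (hα : 1 ≤ α) (n : ℕ) (hn : 1 ≤ n) :
    ∑ i ∈ Finset.Icc 1 n, (i : ℝ) ^ α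
      ≤ (n : ℝ) * ((n : ℝ) + 1) ^ (2 * α)
          / (((n : ℝ) + 1) * ((n : ℝ) + 2) ^ α - (n : ℝ) * ((n : ℝ) + 1) ^ α) := by
  induction n, hn using Nat.le_induction with
  | base =>
    simp only [Nat.cast_one]
    rw [Finset.Icc_self, Finset.sum_singleton, Nat.cast_one, Real.one_rpow]
    rw [le_div_iff₀ (by simpa using denom_pos α hα 1)]
    have hst := step_ineq α hα 0 le_rfl
    norm_num at hst
    have h4 : (2:ℝ)^(2*α) = (4:ℝ)^α := by
      rw [Real.rpow_mul (by norm_num : (0:ℝ) ≤ 2)]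
      norm_num [show ((2:ℝ)^(2:ℝ)) = 4 by
        rw [show (2:ℝ) = ((2:ℕ):ℝ) by norm_num, Real.rpow_natCast]; norm_num]
    norm_num
    rw [h4]
    nlinarith [hst]
  | succ m hm ih =>
    have hm0 : (0:ℝ) ≤ (m:ℝ) := m.cast_nonneg
    have hDm := denom_pos α hα m
    have hDm1 := denom_pos α hα (m+1)
    rw [Finset.sum_Icc_succ_top (by omega : 1 ≤ m + 1)]
    push_cast at hDm1 ⊢
    have c1 : ((m:ℝ)+1+1) = (m:ℝ)+2 := by ring
    have c2 : ((m:ℝ)+1+2) = (m:ℝ)+3 := by ring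
    rw [c1, c2] at hDm1 ⊢
    set N := (m:ℝ)
    have hA : (N+1)^(2*α) = (N+1)^α * (N+1)^α := by
      rw [two_mul, Real.rpow_add (by positivity)]
    have step1 : N * (N+1)^(2*α) / ((N+1)*(N+2)^α - N*(N+1)^α) + (N+1)^α
        = ((N+1)^α * ((N+1)*(N+2)^α)) / ((N+1)*(N+2)^α - N*(N+1)^α) := by
      rw [hA]
      field_simp
      ring
    have hIH : ∑ i ∈ Finset.Icc 1 m, (i:ℝ)^α + (N+1)^α
        ≤ N * (N+1)^(2*α) / ((N+1)*(N+2)^α - N*(N+1)^α) + (N+1)^α := by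
      linarith [ih]
    rw [step1] at hIH
    refine le_trans hIH ?_
    rw [div_le_div_iff₀ hDm (by linarith [hDm1])]
    -- reduce to polynomial inequality in A, B, C
    have hB : (0:ℝ) < (N+2)^α := Real.rpow_pos_of_pos (by linarith) α
    have hA0 : (0:ℝ) < (N+1)^α := Real.rpow_pos_of_pos (by linarith) α
    have hC : (0:ℝ) ≤ (N+3)^α := Real.rpow_nonneg (by linarith) α
    have hAB : ((N+1)*(N+2))^α = (N+1)^α * (N+2)^α :=
      Real.mul_rpow (by linarith) (by linarith)
    have hAC : ((N+1)*(N+3))^α = (N+1)^α * (N+3)^α :=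
      Real.mul_rpow (by linarith) (by linarith)
    have hBB : ((N+2)^2)^α = (N+2)^α * (N+2)^α := by
      rw [sq, Real.mul_rpow (by linarith) (by linarith)]
    have hB2 : (N+2)^(2*α) = (N+2)^α * (N+2)^α := by
      rw [two_mul, Real.rpow_add (by linarith)]
    have key := step_ineq α hα N hm0
    rw [hAC, hBB, hAB] at key
    -- key : (N+2) * ((N+1)^α * (N+3)^α) ≤ (N+1)*((N+2)^α*(N+2)^α) + (N+1)^α*(N+2)^α
    rw [hB2]
    nlinarith [mul_le_mul_of_nonneg_right key hB.le, mul_pos hA0 hB,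
      mul_nonneg (mul_nonneg hA0.le hB.le) hB.le]
end

section
/- For every real α ≥ 1 and integer n ≥ 1, with Λ_n = ∑_{i=1}^n i^α, one has Λ_{n+1}/(n+1)^α − Λ_n/n^α ≤ 1/(α+1). -/
/-!
Since `Λ_{n+1} = Λ_n + (n+1)^α`, the claim says `Λ_n ≥ α / (α + 1) · B_n` with
`B_n = 1 / (n^(-α) - (n+1)^(-α))`. This follows by summing the increments
`α (B_{n+1} - B_n) ≤ (α + 1) (n+1)^α` from `B_0 = 0`. After clearing denominators an increment
bound is the three-point inequality
`(α + 1) y^(2α) ≤ (y+1)^α y^α + (y-1)^α y^α + (α - 1) (y+1)^α (y-1)^α` at `y = n + 1`, which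
scales (`t = 1/y`) to `α + 1 ≤ (1+t)^α + (1-t)^α + (α - 1) (1-t²)^α` on `[0, 1]`. The right side
is increasing in `t`, because `(1+t)^β - (1-t)^β ≥ 2βt (1-t²)^β` for `β = α - 1 ≥ 0`; dividing by
`(1-t²)^β`, this in turn holds because `(1-t)^(-β) - (1+t)^(-β) - 2βt` has derivative
`β ((1-t)^(-β-1) + (1+t)^(-β-1) - 2) ≥ 0` by AM-GM.
-/

open Real Set

lemma image_le_image_of_hasDerivAt_nonneg {f f' : ℝ → ℝ} {a b : ℝ} (hab : a ≤ b)
    (hf : ContinuousOn f (Icc a b)) (hf' : ∀ x ∈ Ioo a b, HasDerivAt f (f' x) x)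
    (hf'₀ : ∀ x ∈ Ioo a b, 0 ≤ f' x) : f a ≤ f b := by
  rw [← interior_Icc] at hf' hf'₀
  exact monotoneOn_of_hasDerivWithinAt_nonneg (convex_Icc a b) hf
    (fun x hx ↦ (hf' x hx).hasDerivWithinAt) hf'₀ (left_mem_Icc.2 hab) (right_mem_Icc.2 hab) hab

lemma hasDerivAt_one_add_rpow (p : ℝ) {x : ℝ} (hx : -1 < x) :
    HasDerivAt (fun x ↦ (1 + x) ^ p) (p * (1 + x) ^ (p - 1)) x := by
  simpa using ((hasDerivAt_id x).const_add 1).rpow_const (p := p) (Or.inl (by simp; linarith))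

lemma hasDerivAt_one_sub_rpow (p : ℝ) {x : ℝ} (hx : x < 1) :
    HasDerivAt (fun x ↦ (1 - x) ^ p) (-(p * (1 - x) ^ (p - 1))) x := by
  simpa using ((hasDerivAt_id x).const_sub 1).rpow_const (p := p) (Or.inl (by simp; linarith))

lemma two_mul_mul_le_one_sub_rpow_neg_sub_one_add_rpow_neg {β t : ℝ} (hβ : 0 ≤ β)
    (ht₀ : 0 ≤ t) (ht₁ : t < 1) :
    2 * β * t ≤ (1 - t) ^ (-β) - (1 + t) ^ (-β) := by
  have hderiv : ∀ x ∈ Icc 0 t, HasDerivAt (fun x ↦ (1 - x) ^ (-β) - (1 + x) ^ (-β) - 2 * β * x)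
      (β * ((1 - x) ^ (-β - 1) + (1 + x) ^ (-β - 1) - 2)) x := fun x hx ↦ by
    refine (((hasDerivAt_one_sub_rpow (-β) (hx.2.trans_lt ht₁)).sub
      (hasDerivAt_one_add_rpow (-β) (by linarith [hx.1]))).sub
      ((hasDerivAt_id' x).const_mul (2 * β))).congr_deriv ?_
    ring
  have key := image_le_image_of_hasDerivAt_nonneg ht₀
    (fun x hx ↦ (hderiv x hx).continuousAt.continuousWithinAt)
    (fun x hx ↦ hderiv x (Ioo_subset_Icc_self hx)) ?_
  · norm_num at key; linarith
  intro x ⟨hx₀, hxt⟩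
  have hsub : 0 < 1 - x := by linarith
  have hadd : 0 < 1 + x := by linarith
  -- AM-GM: both terms are positive and their product is `(1 - x ^ 2) ^ (-β - 1) ≥ 1`
  have hprod : 1 ≤ (1 - x) ^ (-β - 1) * (1 + x) ^ (-β - 1) := by
    rw [← mul_rpow hsub.le hadd.le]
    exact one_le_rpow_of_pos_of_le_one_of_nonpos (by nlinarith) (by nlinarith) (by linarith)
  have := rpow_pos_of_pos hsub (-β - 1)
  have := rpow_pos_of_pos hadd (-β - 1)
  have : 2 ≤ (1 - x) ^ (-β - 1) + (1 + x) ^ (-β - 1) := by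
    nlinarith [sq_nonneg ((1 - x) ^ (-β - 1) - (1 + x) ^ (-β - 1))]
  exact mul_nonneg hβ (by linarith)

lemma two_mul_mul_rpow_le_one_add_rpow_sub_one_sub_rpow {β x : ℝ} (hβ : 0 ≤ β)
    (hx₀ : 0 ≤ x) (hx₁ : x < 1) :
    2 * β * x * ((1 + x) * (1 - x)) ^ β ≤ (1 + x) ^ β - (1 - x) ^ β := by
  have hsub : 0 < 1 - x := by linarith
  have hadd : 0 < 1 + x := by linarith
  have h := mul_le_mul_of_nonneg_right
    (two_mul_mul_le_one_sub_rpow_neg_sub_one_add_rpow_neg hβ hx₀ hx₁)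
    (rpow_nonneg (mul_nonneg hadd.le hsub.le) β)
  rw [mul_rpow hadd.le hsub.le, rpow_neg hsub.le, rpow_neg hadd.le] at h
  rw [mul_rpow hadd.le hsub.le]
  have := (rpow_pos_of_pos hsub β).ne'
  have := (rpow_pos_of_pos hadd β).ne'
  refine h.trans_eq ?_
  field_simp

lemma add_one_le_one_add_rpow_add_one_sub_rpow_add {α t : ℝ} (hα : 1 ≤ α)
    (ht₀ : 0 ≤ t) (ht₁ : t ≤ 1) :
    α + 1 ≤ (1 + t) ^ α + (1 - t) ^ α + (α - 1) * ((1 + t) * (1 - t)) ^ α := by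
  have hcont : Continuous fun x : ℝ ↦
      (1 + x) ^ α + (1 - x) ^ α + (α - 1) * ((1 + x) * (1 - x)) ^ α := by
    fun_prop (disch := linarith)
  have key := image_le_image_of_hasDerivAt_nonneg ht₀ hcont.continuousOn
    (f' := fun x ↦ α * ((1 + x) ^ (α - 1) - (1 - x) ^ (α - 1)
      - 2 * (α - 1) * x * ((1 + x) * (1 - x)) ^ (α - 1))) ?_ ?_
  · norm_num at key
    linarith
  · intro x ⟨hx₀, hxt⟩
    have hprod : HasDerivAt (fun x : ℝ ↦ (1 + x) * (1 - x)) (1 * (1 - x) + (1 + x) * (-1)) x :=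
      ((hasDerivAt_id' x).const_add 1).mul ((hasDerivAt_id' x).const_sub 1)
    refine (((hasDerivAt_one_add_rpow α (by linarith)).add
      (hasDerivAt_one_sub_rpow α (by linarith))).add
      ((hprod.rpow_const (p := α) (Or.inl (by nlinarith))).const_mul (α - 1))).congr_deriv ?_
    ring
  · intro x ⟨hx₀, hxt⟩
    have := two_mul_mul_rpow_le_one_add_rpow_sub_one_sub_rpow (by linarith : 0 ≤ α - 1)
      hx₀.le (hxt.trans_le ht₁)
    exact mul_nonneg (by linarith) (by linarith)

lemma add_one_mul_rpow_mul_rpow_le {α y : ℝ} (hα : 1 ≤ α) (hy : 1 ≤ y) :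
    (α + 1) * (y ^ α * y ^ α) ≤
      (y + 1) ^ α * y ^ α + (y - 1) ^ α * y ^ α + (α - 1) * ((y + 1) ^ α * (y - 1) ^ α) := by
  have hy₀ : 0 < y := by linarith
  have key := add_one_le_one_add_rpow_add_one_sub_rpow_add hα (t := y⁻¹) (by positivity)
    (inv_le_one_of_one_le₀ hy)
  have hscale : ∀ s : ℝ, 0 ≤ 1 + s * y⁻¹ → (1 + s * y⁻¹) ^ α * y ^ α = (y + s) ^ α := by
    intro s hs
    rw [← mul_rpow hs hy₀.le]
    field_simp
  have hadd := hscale 1 (by positivity)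
  have hsub := hscale (-1) (by simpa [← sub_eq_add_neg] using inv_le_one_of_one_le₀ hy)
  simp only [one_mul, neg_one_mul, ← sub_eq_add_neg] at hadd hsub
  rw [mul_rpow (by positivity) (by simpa using inv_le_one_of_one_le₀ hy)] at key
  have hyα := rpow_pos_of_pos hy₀ α
  calc (α + 1) * (y ^ α * y ^ α)
      ≤ ((1 + y⁻¹) ^ α + (1 - y⁻¹) ^ α + (α - 1) * ((1 + y⁻¹) ^ α * (1 - y⁻¹) ^ α))
        * (y ^ α * y ^ α) := by gcongr
    _ = _ := by rw [← hadd, ← hsub]; ring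

noncomputable def powSum (α : ℝ) (n : ℕ) : ℝ := ∑ i ∈ Finset.Icc 1 n, (i : ℝ) ^ α

lemma powSum_zero (α : ℝ) : powSum α 0 = 0 := by simp [powSum]

lemma powSum_succ (α : ℝ) (n : ℕ) : powSum α (n + 1) = powSum α n + ((n : ℝ) + 1) ^ α := by
  rw [powSum, Finset.sum_Icc_succ_top (by omega), powSum]
  push_cast
  rfl

-- `1 / (n ^ (-α) - (n + 1) ^ (-α))` for `n ≠ 0`, but written so that it vanishes at `n = 0`.
noncomputable def powGapInv (α : ℝ) (n : ℕ) : ℝ :=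
  (n : ℝ) ^ α * ((n : ℝ) + 1) ^ α / (((n : ℝ) + 1) ^ α - (n : ℝ) ^ α)

lemma powGapInv_zero {α : ℝ} (hα : α ≠ 0) : powGapInv α 0 = 0 := by
  simp [powGapInv, zero_rpow hα]

lemma powGapInv_pos {α : ℝ} (hα : 0 < α) {n : ℕ} (hn : n ≠ 0) : 0 < powGapInv α n := by
  have hn₀ : (0 : ℝ) < n := by positivity
  have := rpow_lt_rpow hn₀.le (lt_add_one (n : ℝ)) hα
  unfold powGapInv
  have := rpow_pos_of_pos hn₀ α
  have := rpow_pos_of_pos (hn₀.trans (lt_add_one (n : ℝ))) α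
  apply div_pos <;> nlinarith

lemma mul_powGapInv_succ_le {α : ℝ} (hα : 1 ≤ α) (n : ℕ) :
    α * powGapInv α (n + 1) ≤ α * powGapInv α n + (α + 1) * ((n : ℝ) + 1) ^ α := by
  have hn : (0 : ℝ) ≤ n := n.cast_nonneg
  have key := add_one_mul_rpow_mul_rpow_le hα (y := (n : ℝ) + 1) (by linarith)
  simp only [add_sub_cancel_right] at key
  unfold powGapInv
  push_cast
  set P₀ := (n : ℝ) ^ α
  set P₁ := ((n : ℝ) + 1) ^ α
  set P₂ := ((n : ℝ) + 1 + 1) ^ α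
  have h₀ : 0 ≤ P₀ := rpow_nonneg hn α
  have h₀₁ : P₀ < P₁ := rpow_lt_rpow hn (by linarith) (by linarith)
  have h₁₂ : P₁ < P₂ := rpow_lt_rpow (by linarith) (by linarith) (by linarith)
  rw [mul_div_assoc', mul_div_assoc', div_add' _ _ _ (by linarith),
    div_le_div_iff₀ (by linarith) (by linarith)]
  -- the difference of the two sides is `P₁` times the difference of the two sides of `key`
  nlinarith [mul_le_mul_of_nonneg_left key (h₀.trans h₀₁.le)]

lemma mul_powGapInv_le_powSum {α : ℝ} (hα : 1 ≤ α) (n : ℕ) :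
    α * powGapInv α n ≤ (α + 1) * powSum α n := by
  induction n with
  | zero => simp [powGapInv_zero (by linarith : α ≠ 0), powSum_zero]
  | succ n ih =>
    rw [powSum_succ]
    linarith [mul_powGapInv_succ_le hα n]

lemma powSum_succ_div_sub_powSum_div (α : ℝ) {n : ℕ} (hn : n ≠ 0) :
    powSum α (n + 1) / ((n : ℝ) + 1) ^ α - powSum α n / (n : ℝ) ^ α =
      1 - powSum α n / powGapInv α n := by
  have hn₀ : (0 : ℝ) < n := by positivity
  have := (rpow_pos_of_pos hn₀ α).ne'
  have := (rpow_pos_of_pos (hn₀.trans (lt_add_one (n : ℝ))) α).ne'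
  rw [powSum_succ, powGapInv, div_div_eq_mul_div]
  field_simp
  ring

theorem lambda_ratio_difference_upper (α : ℝ) (hα : 1 ≤ α) (n : ℕ) (hn : 1 ≤ n) :
    (∑ i ∈ Finset.Icc 1 (n + 1), (i : ℝ) ^ α) / ((n : ℝ) + 1) ^ α
      - (∑ i ∈ Finset.Icc 1 n, (i : ℝ) ^ α) / (n : ℝ) ^ α ≤ 1 / (α + 1) := by
  change powSum α (n + 1) / _ - powSum α n / _ ≤ _
  have hn₀ : n ≠ 0 := by omega
  have hB := powGapInv_pos (by linarith) hn₀
  have hbound : α / (α + 1) ≤ powSum α n / powGapInv α n := by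
    rw [div_le_div_iff₀ (by linarith) hB]
    linarith [mul_powGapInv_le_powSum hα n]
  rw [powSum_succ_div_sub_powSum_div α hn₀]
  calc 1 - powSum α n / powGapInv α n ≤ 1 - α / (α + 1) := by linarith
    _ = 1 / (α + 1) := by field_simp; ring
end

section
/- For every real α ≥ 1 and integer n ≥ 1, with Λ_n = ∑_{i=1}^n i^α, one has (Λ_n/n^α) · log((Λ_{n+1}/(n+1)^α)/(Λ_n/n^α)) ≤ 1/(α+1). -/
/-!
Write `a = Λ_n / n^α` and `b = Λ_{n+1} / (n+1)^α`. Since `log x ≤ x - 1`, `a log (b/a) ≤ b - a`,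
and `b - a = 1 - Λ_n (n^{-α} - (n+1)^{-α})`, so it suffices that
`(α + 1) Λ_n ≥ α n^α (n+1)^α / ((n+1)^α - n^α)`. This goes by induction on `n`: with
`h(t) = t^α / ((t+1)^α - t^α)` the step is `h(t+1) - h(t) ≤ 1/α`, which follows from `h' ≤ 1/α`.
Writing `t = e^{m-d}` and `t + 1 = e^{m+d}`, the bound `h' ≤ 1/α` becomes `α sinh d ≤ sinh (α d)`,
true for `α ≥ 1` because `cosh` is increasing on `[0, ∞)`.
-/

open Real Set

namespace Real

theorem mul_sinh_le_sinh_mul {α x : ℝ} (hα : 1 ≤ α) (hx : 0 ≤ x) :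
    α * sinh x ≤ sinh (α * x) := by
  have hderiv (y : ℝ) : HasDerivAt (fun y => sinh (α * y) - α * sinh y)
      (α * (cosh (α * y) - cosh y)) y := by
    have h : HasDerivAt (fun y => sinh (α * y)) (cosh (α * y) * α) y := by
      simpa using ((hasDerivAt_id y).const_mul α).sinh
    exact (h.sub ((hasDerivAt_sinh y).const_mul α)).congr_deriv (by ring)
  have hmono : MonotoneOn (fun y => sinh (α * y) - α * sinh y) (Ici 0) := by
    refine monotoneOn_of_hasDerivWithinAt_nonneg (convex_Ici 0)
      (fun y _ => (hderiv y).continuousAt.continuousWithinAt)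
      (fun y _ => (hderiv y).hasDerivWithinAt) fun y hy => ?_
    rw [interior_Ici, mem_Ioi] at hy
    have : cosh y ≤ cosh (α * y) := by
      rw [cosh_le_cosh, abs_of_pos hy, abs_of_pos (by positivity)]
      nlinarith
    nlinarith
  simpa using hmono self_mem_Ici hx hx

theorem exp_sub_exp_eq_two_mul_exp_mul_sinh (p q : ℝ) :
    exp q - exp p = 2 * exp ((p + q) / 2) * sinh ((q - p) / 2) := by
  have hq : exp q = exp ((p + q) / 2) * exp ((q - p) / 2) := by rw [← exp_add]; ring_nf
  have hp : exp p = exp ((p + q) / 2) * exp (-((q - p) / 2)) := by rw [← exp_add]; ring_nf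
  rw [sinh_eq, hq, hp]
  ring

theorem mul_sub_mul_rpow_le_rpow_sub_rpow {α a b : ℝ} (hα : 1 ≤ α) (ha : 0 < a) (hab : a ≤ b) :
    α * (b - a) * (a * b) ^ ((α - 1) / 2) ≤ b ^ α - a ^ α := by
  obtain ⟨p, rfl⟩ : ∃ p, exp p = a := ⟨log a, exp_log ha⟩
  obtain ⟨q, rfl⟩ : ∃ q, exp q = b := ⟨log b, exp_log (ha.trans_le hab)⟩
  have hpq : 0 ≤ (q - p) / 2 := by have := exp_le_exp.1 hab; linarith
  rw [← exp_add, ← exp_mul, ← exp_mul, ← exp_mul, exp_sub_exp_eq_two_mul_exp_mul_sinh,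
    exp_sub_exp_eq_two_mul_exp_mul_sinh]
  have hsinh := mul_sinh_le_sinh_mul hα hpq
  calc α * (2 * exp ((p + q) / 2) * sinh ((q - p) / 2)) * exp ((p + q) * ((α - 1) / 2))
      = 2 * exp ((p * α + q * α) / 2) * (α * sinh ((q - p) / 2)) := by
        rw [show (p * α + q * α) / 2 = (p + q) / 2 + (p + q) * ((α - 1) / 2) by ring, exp_add]
        ring
    _ ≤ 2 * exp ((p * α + q * α) / 2) * sinh ((q * α - p * α) / 2) := by
        rw [show (q * α - p * α) / 2 = α * ((q - p) / 2) by ring]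
        gcongr

lemma mul_log_div_le_sub {a b : ℝ} (ha : 0 < a) (hb : 0 < b) : a * log (b / a) ≤ b - a := by
  have := mul_le_mul_of_nonneg_left (log_le_sub_one_of_pos (div_pos hb ha)) ha.le
  rwa [mul_sub_one, mul_div_cancel₀ _ ha.ne'] at this

end Real

noncomputable def powRatio (α t : ℝ) : ℝ := t ^ α / ((t + 1) ^ α - t ^ α)

section powRatio

variable {α t : ℝ}

lemma rpow_lt_add_one_rpow (hα : 0 < α) (ht : 0 ≤ t) : t ^ α < (t + 1) ^ α :=
  rpow_lt_rpow ht (lt_add_one t) hα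

lemma add_one_rpow_mul_powRatio (hα : 0 < α) (ht : 0 ≤ t) :
    (t + 1) ^ α * powRatio α t = t ^ α * (1 + powRatio α t) := by
  have := (sub_pos.2 (rpow_lt_add_one_rpow hα ht)).ne'
  unfold powRatio
  field_simp
  ring

lemma hasDerivAt_powRatio (hα : 0 < α) (ht : 0 < t) :
    HasDerivAt (powRatio α) (α * (t * (t + 1)) ^ (α - 1) / ((t + 1) ^ α - t ^ α) ^ 2) t := by
  have hD := (sub_pos.2 (rpow_lt_add_one_rpow hα ht.le)).ne'
  have h₀ : HasDerivAt (fun x : ℝ => x ^ α) (α * t ^ (α - 1)) t :=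
    hasDerivAt_rpow_const (Or.inl ht.ne')
  have h₁ : HasDerivAt (fun x : ℝ => (x + 1) ^ α) (α * (t + 1) ^ (α - 1)) t :=
    HasDerivAt.comp_add_const t 1 (hasDerivAt_rpow_const (Or.inl (by positivity)))
  refine (h₀.div (h₁.sub h₀) hD).congr_deriv ?_
  simp only [Pi.sub_apply]
  have e₀ : t ^ α = t ^ (α - 1) * t := by rw [← rpow_add_one ht.ne']; ring_nf
  have e₁ : (t + 1) ^ α = (t + 1) ^ (α - 1) * (t + 1) := by
    rw [← rpow_add_one (by positivity)]; ring_nf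
  rw [mul_rpow ht.le (by positivity)]
  rw [e₀, e₁] at hD ⊢
  field_simp
  ring

lemma powRatio_add_one_sub_le (hα : 1 ≤ α) (ht : 0 < t) :
    α * (powRatio α (t + 1) - powRatio α t) ≤ 1 := by
  have hα₀ : 0 < α := by linarith
  have hmono : MonotoneOn (fun x => x - α * powRatio α x) (Ioi 0) := by
    refine monotoneOn_of_hasDerivWithinAt_nonneg (convex_Ioi 0)
      (fun x hx => ((hasDerivAt_id x).sub
        ((hasDerivAt_powRatio hα₀ hx).const_mul α)).continuousAt.continuousWithinAt)
      (fun x hx => ((hasDerivAt_id x).sub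
        ((hasDerivAt_powRatio hα₀ (interior_subset hx)).const_mul α)).hasDerivWithinAt) ?_
    intro x hx
    rw [interior_Ioi, mem_Ioi] at hx
    have hD := sub_pos.2 (rpow_lt_add_one_rpow hα₀ hx.le)
    have hx' : 0 < x * (x + 1) := by positivity
    have hsq : ((x * (x + 1)) ^ ((α - 1) / 2)) ^ 2 = (x * (x + 1)) ^ (α - 1) := by
      rw [← rpow_natCast, ← rpow_mul hx'.le]; norm_num
    have hgap := mul_sub_mul_rpow_le_rpow_sub_rpow hα hx (le_add_of_nonneg_right zero_le_one)
    rw [add_sub_cancel_left, mul_one] at hgap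
    have hgap_sq := pow_le_pow_left₀ (by positivity) hgap 2
    rw [mul_pow, hsq] at hgap_sq
    rw [sub_nonneg, ← mul_div_assoc, div_le_one (by positivity)]
    nlinarith
  have := hmono (mem_Ioi.2 ht) (mem_Ioi.2 (by linarith)) (le_add_of_nonneg_right zero_le_one)
  simp only at this
  linarith

end powRatio

theorem mul_add_one_rpow_mul_powRatio_le_sum {α : ℝ} (hα : 1 ≤ α) {n : ℕ} (hn : 1 ≤ n) :
    α * (((n : ℝ) + 1) ^ α * powRatio α n) ≤ (α + 1) * ∑ i ∈ Finset.Icc 1 n, (i : ℝ) ^ α := by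
  have hα₀ : 0 < α := by linarith
  induction n, hn using Nat.le_induction with
  | base =>
    have hbern : 1 + α * 1 ≤ (1 + 1) ^ α := one_add_mul_self_le_rpow_one_add (by norm_num) hα
    have h2 : (1 : ℝ) < 2 ^ α := one_lt_rpow one_lt_two hα₀
    norm_num [powRatio] at hbern ⊢
    rw [← div_eq_mul_inv, mul_div_assoc', div_le_iff₀ (by linarith)]
    nlinarith
  | succ n hn ih =>
    have ht : (0 : ℝ) < n := by exact_mod_cast hn
    have hstep := powRatio_add_one_sub_le hα ht
    rw [Finset.sum_Icc_succ_top (by omega), Nat.cast_add_one,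
      add_one_rpow_mul_powRatio hα₀ (by positivity)]
    nlinarith [rpow_pos_of_pos (by positivity : (0 : ℝ) < n + 1) α]

theorem lambda_ratio_log_upper (α : ℝ) (hα : 1 ≤ α) (n : ℕ) (hn : 1 ≤ n) :
    ((∑ i ∈ Finset.Icc 1 n, (i : ℝ) ^ α) / (n : ℝ) ^ α)
        * Real.log (((∑ i ∈ Finset.Icc 1 (n + 1), (i : ℝ) ^ α) / ((n : ℝ) + 1) ^ α)
            / ((∑ i ∈ Finset.Icc 1 n, (i : ℝ) ^ α) / (n : ℝ) ^ α))
      ≤ 1 / (α + 1) := by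
  have hα₀ : 0 < α := by linarith
  have hn₀ : (0 : ℝ) < n := by exact_mod_cast hn
  have hΛ := mul_add_one_rpow_mul_powRatio_le_sum hα hn
  rw [Finset.sum_Icc_succ_top (by omega), Nat.cast_add_one]
  set S := ∑ i ∈ Finset.Icc 1 n, (i : ℝ) ^ α
  have hS : 0 < S := Finset.sum_pos (fun i hi => by
    have : (0 : ℝ) < i := by exact_mod_cast (Finset.mem_Icc.1 hi).1
    positivity) ⟨1, by simp [hn]⟩
  have hA : 0 < (n : ℝ) ^ α := by positivity
  have hAB : (n : ℝ) ^ α < (n + 1) ^ α := rpow_lt_add_one_rpow hα₀ hn₀.le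
  refine (mul_log_div_le_sub (by positivity) (by positivity)).trans ?_
  rw [powRatio, mul_div_assoc', mul_div_assoc', div_le_iff₀ (sub_pos.2 hAB)] at hΛ
  rw [div_sub_div _ _ (by positivity) hA.ne', div_le_div_iff₀ (by positivity) (by linarith)]
  nlinarith
end

section
/- For every real α ≥ 1 and integer n ≥ 1, with Λ_n = ∑_{i=1}^n i^α, one has Λ_{n+1}/(n+1)^α − Λ_n/n^α ≥ (1/(α+1)) · n^α/(n+1)^α. -/
/-!
Write `A = n^α`, `B = (n+1)^α` and `S = ∑_{1 ≤ i < n} i^α`; the claim is equivalent to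
`(α+1) S (B - A) ≤ α A²`. Termwise, `i^α (B - A) / α = ∫₀¹ i^α (n+t)^(α-1) dt` is at most
`n^(α-1) ∫₀¹ (i+t)^α dt`, because `i (n+t) ≤ n (i+t)` and `i ≤ i + t`. Summed over `1 ≤ i < n`,
these integrals telescope to `n^(α-1) (n^(α+1) - 1) / (α+1) < A² / (α+1)`.
-/

open Finset

theorem rpow_mul_add_rpow_sub_one_le {a b t α : ℝ} (ha : 0 ≤ a) (hab : a ≤ b) (ht : 0 ≤ t)
    (hα : 1 ≤ α) : a ^ α * (b + t) ^ (α - 1) ≤ b ^ (α - 1) * (a + t) ^ α := by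
  have hsplit : ∀ x : ℝ, 0 ≤ x → x ^ α = x * x ^ (α - 1) := fun x hx => by
    rw [← Real.rpow_one_add' hx (by linarith), add_sub_cancel]
  have hb : 0 ≤ b := ha.trans hab
  have hcross : a * (b + t) ≤ b * (a + t) := by nlinarith
  calc a ^ α * (b + t) ^ (α - 1) = a * (a * (b + t)) ^ (α - 1) := by
        rw [hsplit a ha, Real.mul_rpow ha (by linarith), mul_assoc]
    _ ≤ a * (b * (a + t)) ^ (α - 1) := by gcongr
    _ = b ^ (α - 1) * (a * (a + t) ^ (α - 1)) := by
        rw [Real.mul_rpow (by linarith) (by linarith)]; ring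
    _ ≤ b ^ (α - 1) * (a + t) ^ α := by
        rw [hsplit (a + t) (by linarith)]
        gcongr
        linarith

theorem integral_add_rpow (c : ℝ) {β : ℝ} (hβ : -1 < β) :
    ∫ t in (0 : ℝ)..1, (c + t) ^ β = ((c + 1) ^ (β + 1) - c ^ (β + 1)) / (β + 1) := by
  rw [intervalIntegral.integral_comp_add_left (fun x => x ^ β) c, add_zero,
    integral_rpow (Or.inl hβ)]

theorem rpow_mul_add_one_rpow_sub_le {a b α : ℝ} (ha : 0 ≤ a) (hab : a ≤ b) (hα : 1 ≤ α) :
    a ^ α * ((b + 1) ^ α - b ^ α) / α ≤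
      b ^ (α - 1) * ((a + 1) ^ (α + 1) - a ^ (α + 1)) / (α + 1) := by
  have hcont : ∀ c β : ℝ, 0 ≤ β → Continuous fun t : ℝ => (c + t) ^ β := fun c β hβ =>
    (continuous_const.add continuous_id).rpow_const fun _ => Or.inr hβ
  have hint := intervalIntegral.integral_mono_on zero_le_one
    (((hcont b (α - 1) (by linarith)).const_mul (a ^ α)).intervalIntegrable
      (μ := MeasureTheory.volume) 0 1)
    (((hcont a α (by linarith)).const_mul (b ^ (α - 1))).intervalIntegrable
      (μ := MeasureTheory.volume) 0 1)
    fun t ht => rpow_mul_add_rpow_sub_one_le ha hab ht.1 hα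
  rwa [intervalIntegral.integral_const_mul, intervalIntegral.integral_const_mul,
    integral_add_rpow b (by linarith), integral_add_rpow a (by linarith), sub_add_cancel,
    ← mul_div_assoc, ← mul_div_assoc] at hint

theorem sum_Ico_rpow_mul_add_one_rpow_sub_le {α : ℝ} (hα : 1 ≤ α) {n : ℕ} (hn : 1 ≤ n) :
    (∑ i ∈ Ico 1 n, (i : ℝ) ^ α) * (((n : ℝ) + 1) ^ α - (n : ℝ) ^ α) / α ≤
      ((n : ℝ) ^ α) ^ 2 / (α + 1) := by
  have htel := sum_Ico_sub (fun i : ℕ => (i : ℝ) ^ (α + 1)) hn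
  push_cast at htel
  calc (∑ i ∈ Ico 1 n, (i : ℝ) ^ α) * (((n : ℝ) + 1) ^ α - (n : ℝ) ^ α) / α
      = ∑ i ∈ Ico 1 n, (i : ℝ) ^ α * (((n : ℝ) + 1) ^ α - (n : ℝ) ^ α) / α := by
        rw [sum_mul, sum_div]
    _ ≤ ∑ i ∈ Ico 1 n,
          (n : ℝ) ^ (α - 1) * (((i : ℝ) + 1) ^ (α + 1) - (i : ℝ) ^ (α + 1)) / (α + 1) :=
        sum_le_sum fun i hi => rpow_mul_add_one_rpow_sub_le (Nat.cast_nonneg i)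
          (by exact_mod_cast (mem_Ico.1 hi).2.le) hα
    _ = (n : ℝ) ^ (α - 1) * ((n : ℝ) ^ (α + 1) - 1) / (α + 1) := by
        rw [← sum_div, ← mul_sum, htel, Real.one_rpow]
    _ ≤ (n : ℝ) ^ (α - 1) * (n : ℝ) ^ (α + 1) / (α + 1) := by
        gcongr
        linarith
    _ = ((n : ℝ) ^ α) ^ 2 / (α + 1) := by
        rw [← Real.rpow_add (by exact_mod_cast hn), sq, ← Real.rpow_add (by exact_mod_cast hn)]
        ring_nf

theorem lambda_ratio_difference_lower (α : ℝ) (hα : 1 ≤ α) (n : ℕ) (hn : 1 ≤ n) :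
    (∑ i ∈ Finset.Icc 1 (n + 1), (i : ℝ) ^ α) / ((n : ℝ) + 1) ^ α
      - (∑ i ∈ Finset.Icc 1 n, (i : ℝ) ^ α) / (n : ℝ) ^ α
      ≥ 1 / (α + 1) * ((n : ℝ) ^ α / ((n : ℝ) + 1) ^ α) := by
  have hA : 0 < (n : ℝ) ^ α := by positivity
  have hB : 0 < ((n : ℝ) + 1) ^ α := by positivity
  have key := sum_Ico_rpow_mul_add_one_rpow_sub_le hα hn
  rw [← Ico_add_one_right_eq_Icc, ← Ico_add_one_right_eq_Icc, sum_Ico_succ_top (by omega),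
    sum_Ico_succ_top (by omega), ge_iff_le, ← sub_nonneg]
  push_cast
  set S := ∑ i ∈ Ico 1 n, (i : ℝ) ^ α
  set A := (n : ℝ) ^ α
  set B := ((n : ℝ) + 1) ^ α
  have hdiff : (S + A + B) / B - (S + A) / A - 1 / (α + 1) * (A / B)
      = α * (A ^ 2 / (α + 1) - S * (B - A) / α) / (A * B) := by
    field_simp
    ring
  rw [hdiff]
  exact div_nonneg (mul_nonneg (by linarith) (sub_nonneg.2 key)) (by positivity)
end

section
/- Fix M > 0. The function h ↦ (e^{h−M} − h + M − 1)/h² is increasing on [max(2, 2M), ∞). -/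
open Real Set

theorem hasDerivAt_exp_sub_div_sq (M : ℝ) {x : ℝ} (hx : x ≠ 0) :
    HasDerivAt (fun h : ℝ => (exp (h - M) - h + M - 1) / h ^ 2)
      (((exp (x - M) - 1) * (x - 2) + 2 * (x - M)) / x ^ 3) x := by
  have hnum : HasDerivAt (fun h : ℝ => exp (h - M) - h + M - 1) (exp (x - M) - 1) x := by
    have hexp : HasDerivAt (fun h : ℝ => exp (h - M)) (exp (x - M)) x := by
      simpa using ((hasDerivAt_id x).sub_const M).exp
    exact ((hexp.sub (hasDerivAt_id x)).add_const M).sub_const 1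
  have hden : HasDerivAt (fun h : ℝ => h ^ 2) (2 * x) x := by
    simpa using hasDerivAt_pow 2 x
  refine (hnum.div hden (pow_ne_zero 2 hx)).congr_deriv ?_
  rw [div_eq_div_iff (by positivity) (by positivity)]
  ring

theorem exp_sub_one_mul_sub_two_add_nonneg {M x : ℝ} (h2x : 2 ≤ x) (hMx : 2 * M ≤ x) :
    0 ≤ (exp (x - M) - 1) * (x - 2) + 2 * (x - M) := by
  have hxM : 0 ≤ x - M := by linarith
  have hexp : 0 ≤ exp (x - M) - 1 := by linarith [one_le_exp hxM]
  have := mul_nonneg hexp (sub_nonneg.2 h2x)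
  linarith

theorem aux_function_monotone_general (M : ℝ) :
    MonotoneOn (fun h : ℝ => (Real.exp (h - M) - h + M - 1) / h ^ 2)
      (Set.Ici (max 2 (2 * M))) := by
  have hbounds : ∀ x ∈ Ici (max 2 (2 * M)), 2 ≤ x ∧ 2 * M ≤ x := fun x hx =>
    max_le_iff.1 hx
  have hderiv : ∀ x ∈ Ici (max 2 (2 * M)), HasDerivAt _ _ x := fun x hx =>
    hasDerivAt_exp_sub_div_sq M (by linarith [(hbounds x hx).1] : x ≠ 0)
  refine monotoneOn_of_hasDerivWithinAt_nonneg (convex_Ici _)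
    (fun x hx => (hderiv x hx).continuousAt.continuousWithinAt)
    (fun x hx => (hderiv x (interior_subset hx)).hasDerivWithinAt) fun x hx => ?_
  obtain ⟨h2x, hMx⟩ := hbounds x (interior_subset hx)
  exact div_nonneg (exp_sub_one_mul_sub_two_add_nonneg h2x hMx) (by positivity)

theorem aux_function_monotone (M : ℝ) (hM : 0 < M) :
    MonotoneOn (fun h : ℝ => (Real.exp (h - M) - h + M - 1) / h ^ 2)
      (Set.Ici (max 2 (2 * M))) :=
  aux_function_monotone_general M
end

section
/- Let α ≥ 1 be real and Λ_n = ∑_{i=1}^n i^α. Then n^α/Λ_n = (α+1)/n + O(1/n²) as n → ∞, i.e., there is a constant K such that |n^α/Λ_n − (α+1)/n| ≤ K/n² for all n ≥ 1. -/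
/-!
By the mean value theorem, `(i + 1) ^ (α + 1) - i ^ (α + 1)` lies between `(α + 1) i ^ α` and
`(α + 1) (i + 1) ^ α`. Telescoping gives `n ^ (α + 1) ≤ (α + 1) Λ_n ≤ n ^ (α + 1) + (α + 1) n ^ α`,
so `(α + 1) Λ_n` is `n · n ^ α` up to an error of order `n ^ α`, and the estimate follows with
`K = (α + 1) ^ 2`.
-/

open Finset Real

section RpowSums

variable {α : ℝ}

theorem rpow_succ_sub_rpow_mem_Icc (hα : 0 ≤ α) {a : ℝ} (ha : 0 ≤ a) :
    (a + 1) ^ (α + 1) - a ^ (α + 1) ∈ Set.Icc ((α + 1) * a ^ α) ((α + 1) * (a + 1) ^ α) := by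
  have hderiv : ∀ x : ℝ, HasDerivAt (fun y : ℝ => y ^ (α + 1)) ((α + 1) * x ^ α) x := fun x => by
    simpa using hasDerivAt_rpow_const (x := x) (p := α + 1) (Or.inr (by linarith))
  obtain ⟨c, ⟨hac, hca⟩, hslope⟩ := exists_hasDerivAt_eq_slope (fun y : ℝ => y ^ (α + 1))
    (fun x => (α + 1) * x ^ α) (lt_add_one a)
    (fun x _ => (hderiv x).continuousAt.continuousWithinAt) (fun x _ => hderiv x)
  rw [add_sub_cancel_left, div_one] at hslope
  rw [← hslope]
  have hα1 : 0 ≤ α + 1 := by linarith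
  exact ⟨mul_le_mul_of_nonneg_left (rpow_le_rpow ha hac.le hα) hα1,
    mul_le_mul_of_nonneg_left (rpow_le_rpow (ha.trans hac.le) hca.le hα) hα1⟩

theorem rpow_succ_le_mul_sum_Icc_rpow (hα : 0 ≤ α) (n : ℕ) :
    (n : ℝ) ^ (α + 1) ≤ (α + 1) * ∑ i ∈ Icc 1 n, (i : ℝ) ^ α := by
  induction n with
  | zero => simp [zero_rpow (by linarith : α + 1 ≠ 0)]
  | succ n ih =>
    have hstep := (rpow_succ_sub_rpow_mem_Icc hα n.cast_nonneg).2
    rw [sum_Icc_succ_top (by omega), mul_add]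
    push_cast
    linarith

theorem mul_sum_Icc_rpow_le (hα : 0 ≤ α) (n : ℕ) :
    (α + 1) * ∑ i ∈ Icc 1 n, (i : ℝ) ^ α ≤ (n : ℝ) ^ (α + 1) + (α + 1) * (n : ℝ) ^ α := by
  induction n with
  | zero =>
    simp only [Nat.cast_zero, Icc_eq_empty_of_lt zero_lt_one, sum_empty, mul_zero]
    have := rpow_nonneg (le_refl (0 : ℝ)) α
    positivity
  | succ n ih =>
    have hstep := (rpow_succ_sub_rpow_mem_Icc hα n.cast_nonneg).1
    rw [sum_Icc_succ_top (by omega), mul_add]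
    push_cast
    linarith

end RpowSums

theorem abs_div_sub_div_le_sq_div_sq {a c x S : ℝ} (ha : 0 < a) (hc : 0 < c) (hx : 0 < x)
    (hlow : x * a ≤ c * S) (hup : c * S ≤ x * a + c * a) :
    |a / S - c / x| ≤ c ^ 2 / x ^ 2 := by
  have hS : 0 < S := pos_of_mul_pos_right ((mul_pos hx ha).trans_le hlow) hc.le
  have hdiff : a / S - c / x = -(c * S - x * a) / (x * S) := by field_simp; ring
  have hratio : a / S ≤ c / x := by rw [div_le_div_iff₀ hS hx]; linarith
  rw [hdiff, abs_div, abs_neg, abs_of_nonneg (by linarith), abs_of_pos (mul_pos hx hS)]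
  calc (c * S - x * a) / (x * S) ≤ c * a / (x * S) := by gcongr; linarith
    _ = c / x * (a / S) := by field_simp
    _ ≤ c / x * (c / x) := by gcongr
    _ = c ^ 2 / x ^ 2 := by ring

theorem lambda_over_Lambda_asymptotic (α : ℝ) (hα : 1 ≤ α) :
    ∃ K : ℝ, ∀ n : ℕ, 1 ≤ n →
      |(n : ℝ) ^ α / (∑ i ∈ Finset.Icc 1 n, (i : ℝ) ^ α) - (α + 1) / (n : ℝ)|
        ≤ K / (n : ℝ) ^ 2 := by
  have hα0 : 0 ≤ α := by linarith
  refine ⟨(α + 1) ^ 2, fun n hn => ?_⟩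
  have hn0 : (0 : ℝ) < n := by exact_mod_cast hn
  have hpow : (n : ℝ) ^ (α + 1) = n * (n : ℝ) ^ α := by rw [rpow_add_one hn0.ne', mul_comm]
  have hlow := rpow_succ_le_mul_sum_Icc_rpow hα0 n
  have hup := mul_sum_Icc_rpow_le hα0 n
  rw [hpow] at hlow hup
  exact abs_div_sub_div_le_sq_div_sq (rpow_pos_of_pos hn0 α) (by linarith) hn0 hlow hup
end

section
/- Let λ : ℕ → ℝ be positive with Λ_n = ∑_{k=1}^n λ_k, and suppose M := sup_n (Λ_n/λ_n)·log((Λ_{n+1}/λ_{n+1})/(Λ_n/λ_n)) < ∞. Define h_1(μ) = 0 and h_{k+1}(μ) = (Λ_k/Λ_{k+1})·h_k(μ) − (Λ_k/Λ_{k+1})·log(λ_{k+1}/λ_k − (λ_{k+1}/(Λ_k μ))·e^{h_k(μ)}) whenever the argument of the log is positive. Then for every μ ≥ e^M and every k ≥ 2, the quantity h_k(μ) is well-defined and satisfies h_k(μ) ≤ M·Λ_{k−1}/Λ_k. -/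
/-!
Write `c_k = M λ_k / Λ_k`, so that the claimed bound reads `h_k ≤ M - c_k`, and prove it for all
`k ≥ 1` by induction. The hypothesis on `M` says `(Λ_{k+1} λ_k) / (λ_{k+1} Λ_k) ≤ e^{c_k}`; combined
with `μ ≥ e^M` and `h_k ≤ M - c_k`, this bounds the argument of the logarithm below by `e^{-c_k}`.
Hence `h_{k+1} ≤ (Λ_k / Λ_{k+1}) (M - c_k + c_k) = M - c_{k+1}`.
-/

open Real Finset

lemma le_exp_div_of_mul_log_le {t r M : ℝ} (ht : 0 < t) (hr : 0 < r) (h : t * log r ≤ M) :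
    r ≤ exp (M / t) :=
  (log_le_iff_le_exp hr).mp ((le_div_iff₀' ht).mpr h)

lemma exp_neg_le_sub_div_mul_exp {L l l' M μ x : ℝ} (hL : 0 < L) (hl : 0 < l) (hl' : 0 < l')
    (hM : L / l * log ((L + l') / l' / (L / l)) ≤ M) (hμ : exp M ≤ μ)
    (hx : x ≤ M - M * l / L) :
    exp (-(M * l / L)) ≤ l' / l - l' / (L * μ) * exp x := by
  set c := M * l / L
  have hratio : (L + l') / l' / (L / l) ≤ exp c := by
    calc _ ≤ exp (M / (L / l)) := le_exp_div_of_mul_log_le (by positivity) (by positivity) hM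
      _ = exp c := by rw [div_div_eq_mul_div]
  have hweight : exp (-c) * (L + l') / L ≤ l' / l := by
    calc exp (-c) * (L + l') / L = exp (-c) * ((L + l') / l' / (L / l)) * (l' / l) := by
          field_simp
      _ ≤ exp (-c) * exp c * (l' / l) := by gcongr
      _ = l' / l := by rw [← exp_add, neg_add_cancel, exp_zero, one_mul]
  have hexp : l' / (L * μ) * exp x ≤ l' / L * exp (-c) := by
    have hμ0 : 0 < μ := (exp_pos M).trans_le hμ
    calc l' / (L * μ) * exp x = l' / L * (exp x / exp M) * (exp M / μ) := by
          field_simp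
      _ ≤ l' / L * exp (-c) * 1 := by
          gcongr
          · rw [← exp_sub]; exact exp_le_exp.mpr (by linarith)
          · exact (div_le_one hμ0).mpr hμ
      _ = l' / L * exp (-c) := mul_one _
  have hsplit : exp (-c) * (L + l') / L = exp (-c) + l' / L * exp (-c) := by
    field_simp
  linarith

lemma mul_sub_mul_log_le {L l' M c x A : ℝ} (hL : 0 < L) (hl' : 0 < l')
    (hx : x ≤ M - c) (hA : exp (-c) ≤ A) :
    L / (L + l') * x - L / (L + l') * log A ≤ M - M * l' / (L + l') := by
  have hlog : -c ≤ log A := by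
    rw [← log_exp (-c)]; exact log_le_log (exp_pos _) hA
  calc L / (L + l') * x - L / (L + l') * log A = L / (L + l') * (x - log A) := by ring
    _ ≤ L / (L + l') * M := by gcongr; linarith
    _ = M - M * l' / (L + l') := by field_simp; ring

section PartialSums

variable {lam Λ : ℕ → ℝ}

lemma partialSum_zero (hΛ : ∀ n, Λ n = ∑ k ∈ Icc 1 n, lam k) : Λ 0 = 0 := by
  simp [hΛ]

lemma partialSum_succ (hΛ : ∀ n, Λ n = ∑ k ∈ Icc 1 n, lam k) (n : ℕ) :
    Λ (n + 1) = Λ n + lam (n + 1) := by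
  rw [hΛ, hΛ, sum_Icc_succ_top (by omega)]

lemma partialSum_pos (hlam : ∀ k, 1 ≤ k → 0 < lam k) (hΛ : ∀ n, Λ n = ∑ k ∈ Icc 1 n, lam k)
    {n : ℕ} (hn : 1 ≤ n) : 0 < Λ n := by
  rw [hΛ]
  exact sum_pos (fun k hk => hlam k (mem_Icc.mp hk).1) ⟨1, mem_Icc.mpr ⟨le_rfl, hn⟩⟩

end PartialSums

noncomputable def carlemanArg (lam Λ : ℕ → ℝ) (μ : ℝ) (k : ℕ) (x : ℝ) : ℝ :=
  lam (k + 1) / lam k - lam (k + 1) / (Λ k * μ) * exp x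

/-- The paper's `h_k(μ)`; the value at `0` is a placeholder, and `Λ 0 = 0` gives `h_1 = 0`. -/
noncomputable def carlemanSeq (lam Λ : ℕ → ℝ) (μ : ℝ) : ℕ → ℝ
  | 0 => 0
  | k + 1 => Λ k / Λ (k + 1) * carlemanSeq lam Λ μ k
      - Λ k / Λ (k + 1) * log (carlemanArg lam Λ μ k (carlemanSeq lam Λ μ k))

section CarlemanSeq

variable {lam Λ : ℕ → ℝ} {M μ : ℝ}

lemma carlemanSeq_one (hΛ0 : Λ 0 = 0) : carlemanSeq lam Λ μ 1 = 0 := by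
  simp [carlemanSeq, hΛ0]

lemma exp_neg_le_carlemanArg (hlam : ∀ k, 1 ≤ k → 0 < lam k)
    (hΛ : ∀ n, Λ n = ∑ k ∈ Icc 1 n, lam k)
    (hM : ∀ n, 1 ≤ n →
      (Λ n / lam n) * log ((Λ (n + 1) / lam (n + 1)) / (Λ n / lam n)) ≤ M)
    (hμ : exp M ≤ μ) {k : ℕ} (hk : 1 ≤ k) {x : ℝ} (hx : x ≤ M - M * lam k / Λ k) :
    exp (-(M * lam k / Λ k)) ≤ carlemanArg lam Λ μ k x := by
  have hMk := hM k hk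
  rw [partialSum_succ hΛ] at hMk
  exact exp_neg_le_sub_div_mul_exp (partialSum_pos hlam hΛ hk) (hlam k hk)
    (hlam (k + 1) (by omega)) hMk hμ hx

lemma carlemanSeq_le (hlam : ∀ k, 1 ≤ k → 0 < lam k)
    (hΛ : ∀ n, Λ n = ∑ k ∈ Icc 1 n, lam k)
    (hM : ∀ n, 1 ≤ n →
      (Λ n / lam n) * log ((Λ (n + 1) / lam (n + 1)) / (Λ n / lam n)) ≤ M)
    (hμ : exp M ≤ μ) {k : ℕ} (hk : 1 ≤ k) :
    carlemanSeq lam Λ μ k ≤ M - M * lam k / Λ k := by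
  induction k, hk using Nat.le_induction with
  | base =>
    have hΛ1 : Λ 1 = lam 1 := by rw [partialSum_succ hΛ, partialSum_zero hΛ, zero_add]
    rw [carlemanSeq_one (partialSum_zero hΛ), hΛ1, mul_div_cancel_right₀ _ (hlam 1 le_rfl).ne',
      sub_self]
  | succ k hk ih =>
    rw [carlemanSeq, partialSum_succ hΛ]
    exact mul_sub_mul_log_le (partialSum_pos hlam hΛ hk) (hlam (k + 1) (by omega)) ih
      (exp_neg_le_carlemanArg hlam hΛ hM hμ hk ih)

end CarlemanSeq

theorem recursion_well_defined_and_bounded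
    (lam : ℕ → ℝ) (hlam : ∀ k, 1 ≤ k → 0 < lam k)
    (Λ : ℕ → ℝ) (hΛ : ∀ n, Λ n = ∑ k ∈ Finset.Icc 1 n, lam k)
    (M : ℝ)
    (hM : ∀ n, 1 ≤ n →
      (Λ n / lam n) * Real.log ((Λ (n + 1) / lam (n + 1)) / (Λ n / lam n)) ≤ M)
    (μ : ℝ) (hμ : Real.exp M ≤ μ) :
    ∃ h : ℕ → ℝ, h 1 = 0 ∧
      (∀ k, 1 ≤ k →
        0 < lam (k + 1) / lam k - (lam (k + 1) / (Λ k * μ)) * Real.exp (h k) ∧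
        h (k + 1) = (Λ k / Λ (k + 1)) * h k
          - (Λ k / Λ (k + 1))
              * Real.log (lam (k + 1) / lam k
                  - (lam (k + 1) / (Λ k * μ)) * Real.exp (h k))) ∧
      (∀ k, 2 ≤ k → h k ≤ M * Λ (k - 1) / Λ k) := by
  refine ⟨carlemanSeq lam Λ μ, carlemanSeq_one (partialSum_zero hΛ), fun k hk => ⟨?_, rfl⟩,
    fun k hk => ?_⟩
  · exact (exp_pos _).trans_le
      (exp_neg_le_carlemanArg hlam hΛ hM hμ hk (carlemanSeq_le hlam hΛ hM hμ hk))
  · obtain ⟨j, rfl⟩ : ∃ j, k = j + 1 := ⟨k - 1, by omega⟩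
    have hΛj : 0 < Λ (j + 1) := partialSum_pos hlam hΛ (by omega)
    calc carlemanSeq lam Λ μ (j + 1) ≤ M - M * lam (j + 1) / Λ (j + 1) :=
          carlemanSeq_le hlam hΛ hM hμ (by omega)
      _ = M * Λ (j + 1 - 1) / Λ (j + 1) := by
          rw [Nat.add_sub_cancel, eq_div_iff hΛj.ne', sub_mul, div_mul_cancel₀ _ hΛj.ne',
            partialSum_succ hΛ j]
          ring
end

section
/- As μ → e^M with 0 < μ < e^M, ∫₀^∞ dx/(e^x/μ − x + M − 1) = √2·π·(log(e^M/μ))^{−1/2} + O(1); that is, there exist constants K and δ > 0 such that for all μ with e^M − δ < μ < e^M, |∫₀^∞ dx/(e^x/μ − x + M − 1) − √2 π (M − log μ)^{−1/2}| ≤ K. -/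
/-!
Put `L = log μ` and `ε = M - L`. The substitution `x = t + L` turns the integral into
`∫_{-L}^∞ expKernel ε`, while `√2 π ε^{-1/2} = ∫_ℝ quadKernel ε`. Both kernels are at most
`2 / t²` for `t > 0`, so the pieces beyond `±L` contribute `O(1 / L)`. On `[-L, L]` pair `t`
with `-t`: since `e^t - t - 1 = t²/2 + t³/6 + O(t⁴)`, the cubic terms cancel in
`expKernel ε t + expKernel ε (-t) - 2 quadKernel ε t`, which is therefore bounded uniformly in `ε`,
and the middle piece is `O(L)`. As `μ → e^M`, `L` stays in `(M/2, M)`.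
-/

open MeasureTheory Real Set

noncomputable def expKernel (ε t : ℝ) : ℝ := (exp t - t - 1 + ε)⁻¹

noncomputable def quadKernel (ε t : ℝ) : ℝ := (t ^ 2 / 2 + ε)⁻¹

lemma abs_exp_sub_quadratic_le {x : ℝ} (hx : |x| ≤ 1) :
    |exp x - (1 + x + x ^ 2 / 2)| ≤ |x| ^ 3 / 4 := by
  have h := exp_bound hx (n := 3) (by norm_num)
  norm_num [Finset.sum_range_succ, Nat.factorial] at h
  linarith [pow_nonneg (abs_nonneg x) 3]

lemma abs_exp_add_exp_neg_sub_le {x : ℝ} (hx : |x| ≤ 1) :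
    |exp x + exp (-x) - (2 + x ^ 2)| ≤ x ^ 4 / 8 := by
  have hpos := exp_bound hx (n := 4) (by norm_num)
  have hneg := exp_bound (x := -x) (by rwa [abs_neg]) (n := 4) (by norm_num)
  norm_num [Finset.sum_range_succ, Nat.factorial] at hpos hneg
  rw [Even.pow_abs (by decide)] at hpos hneg
  calc |exp x + exp (-x) - (2 + x ^ 2)|
      = |(exp x - (1 + x + x ^ 2 / 2 + x ^ 3 / 6))
          + (exp (-x) - (1 + -x + x ^ 2 / 2 + (-x) ^ 3 / 6))| := by congr 1; ring
    _ ≤ |exp x - (1 + x + x ^ 2 / 2 + x ^ 3 / 6)|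
          + |exp (-x) - (1 + -x + x ^ 2 / 2 + (-x) ^ 3 / 6)| := abs_add_le _ _
    _ ≤ x ^ 4 / 8 := by linarith [pow_nonneg (sq_nonneg x) 2]

lemma sq_div_four_le_exp_sub_sub_one {x : ℝ} (hx : |x| ≤ 1) : x ^ 2 / 4 ≤ exp x - x - 1 := by
  have h := (abs_le.1 (abs_exp_sub_quadratic_le hx)).1
  have hcube : |x| ^ 3 ≤ x ^ 2 := by
    rw [← sq_abs x, pow_succ]
    exact mul_le_of_le_one_right (sq_nonneg _) hx
  linarith

lemma one_third_le_exp_sub_sub_one {x : ℝ} (hx : 1 ≤ |x|) : 1 / 3 ≤ exp x - x - 1 := by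
  rcases le_abs'.1 hx with hx | hx
  · have htangent : exp (-1) * (x + 2) ≤ exp x := by
      calc exp (-1) * (x + 2) ≤ exp (-1) * exp (x + 1) := by
            gcongr; linarith [add_one_le_exp (x + 1)]
        _ = exp x := by rw [← exp_add]; ring_nf
    have hle : exp (-1) ≤ 1 := exp_le_one_iff.2 (by norm_num)
    have hge : 1 / 3 ≤ exp (-1) := by
      rw [exp_neg, one_div]
      exact inv_anti₀ (exp_pos 1) (exp_one_lt_d9.le.trans (by norm_num))
    nlinarith
  · nlinarith [quadratic_le_exp_of_nonneg (by linarith : 0 ≤ x)]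

lemma abs_inv_add_inv_sub_two_mul_inv_le_six {u v w s : ℝ} (hs : 0 ≤ s) (hu : 0 < u)
    (hv : 0 < v) (hw : 0 < w) (hsu : s / 4 ≤ u) (hsv : s / 4 ≤ v) (hsw : s / 2 ≤ w)
    (hsum : |u + v - 2 * w| ≤ s ^ 2 / 8) (hprod : |u - w| * |v - w| ≤ s ^ 3 / 16) :
    |u⁻¹ + v⁻¹ - 2 * w⁻¹| ≤ 6 := by
  have huv : (s / 4) * (s / 4) ≤ u * v := mul_le_mul hsu hsv (by positivity) hu.le
  have huvw : (s / 4) * (s / 4) * (s / 2) ≤ u * v * w :=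
    mul_le_mul huv hsw (by positivity) (by positivity)
  have key : u⁻¹ + v⁻¹ - 2 * w⁻¹
      = -(u + v - 2 * w) / (u * v) - 2 * ((u - w) * (v - w)) / (u * v * w) := by
    field_simp
    ring
  calc |u⁻¹ + v⁻¹ - 2 * w⁻¹|
      ≤ |u + v - 2 * w| / (u * v) + 2 * (|u - w| * |v - w|) / (u * v * w) := by
        rw [key]
        refine (abs_sub _ _).trans_eq ?_
        rw [abs_div, abs_div, abs_neg, abs_mul 2, abs_mul (u - w), abs_two,
          abs_of_pos (mul_pos hu hv), abs_of_pos (by positivity : 0 < u * v * w)]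
    _ ≤ 2 + 4 := by
        gcongr
        · rw [div_le_iff₀ (by positivity)]
          nlinarith
        · rw [div_le_iff₀ (by positivity)]
          nlinarith
    _ = 6 := by norm_num

section Kernels

variable {ε : ℝ}

lemma exp_sub_sub_one_add_pos (hε : 0 < ε) (t : ℝ) : 0 < exp t - t - 1 + ε := by
  linarith [add_one_le_exp t]

lemma continuous_expKernel (hε : 0 < ε) : Continuous (expKernel ε) :=
  Continuous.inv₀ (by fun_prop) fun t => (exp_sub_sub_one_add_pos hε t).ne'

lemma continuous_quadKernel (hε : 0 < ε) : Continuous (quadKernel ε) :=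
  Continuous.inv₀ (by fun_prop) fun t => by positivity

lemma quadKernel_neg (t : ℝ) : quadKernel ε (-t) = quadKernel ε t := by
  simp [quadKernel]

lemma expKernel_pos (hε : 0 < ε) (t : ℝ) : 0 < expKernel ε t :=
  inv_pos.2 (exp_sub_sub_one_add_pos hε t)

lemma quadKernel_pos (hε : 0 < ε) (t : ℝ) : 0 < quadKernel ε t :=
  inv_pos.2 (by positivity)

lemma expKernel_le_two_div_sq (hε : 0 ≤ ε) {t : ℝ} (ht : 0 < t) : expKernel ε t ≤ 2 / t ^ 2 := by
  rw [expKernel, ← inv_div (t ^ 2) 2]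
  exact inv_anti₀ (by positivity) (by linarith [quadratic_le_exp_of_nonneg ht.le])

lemma quadKernel_le_two_div_sq (hε : 0 ≤ ε) {t : ℝ} (ht : 0 < t) : quadKernel ε t ≤ 2 / t ^ 2 := by
  rw [quadKernel, ← inv_div (t ^ 2) 2]
  exact inv_anti₀ (by positivity) (by linarith)

lemma expKernel_le_three (hε : 0 ≤ ε) {t : ℝ} (ht : 1 ≤ |t|) : expKernel ε t ≤ 3 := by
  rw [expKernel, ← inv_inv (3 : ℝ)]
  exact inv_anti₀ (by norm_num) (by linarith [one_third_le_exp_sub_sub_one ht])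

lemma abs_expKernel_add_expKernel_neg_sub_le_of_abs_le_one (hε : 0 < ε) {t : ℝ} (ht : |t| ≤ 1) :
    |expKernel ε t + expKernel ε (-t) - 2 * quadKernel ε t| ≤ 6 := by
  have ht' : |-t| ≤ 1 := by rwa [abs_neg]
  have hu := sq_div_four_le_exp_sub_sub_one ht
  have hv := sq_div_four_le_exp_sub_sub_one ht'
  have ha := abs_exp_sub_quadratic_le ht
  have hb := abs_exp_sub_quadratic_le ht'
  rw [neg_sq] at hv hb
  rw [abs_neg] at hb
  refine abs_inv_add_inv_sub_two_mul_inv_le_six (sq_nonneg t) (exp_sub_sub_one_add_pos hε t)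
    (exp_sub_sub_one_add_pos hε (-t)) (by positivity) (by linarith) (by linarith) (by linarith)
    ?_ ?_
  · calc _ = |exp t + exp (-t) - (2 + t ^ 2)| := by congr 1; ring
      _ ≤ t ^ 4 / 8 := abs_exp_add_exp_neg_sub_le ht
      _ = (t ^ 2) ^ 2 / 8 := by ring
  · calc _ = |exp t - (1 + t + t ^ 2 / 2)| * |exp (-t) - (1 + -t + t ^ 2 / 2)| := by
          congr 2 <;> ring
      _ ≤ (|t| ^ 3 / 4) * (|t| ^ 3 / 4) := mul_le_mul ha hb (abs_nonneg _) (by positivity)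
      _ = (t ^ 2) ^ 3 / 16 := by rw [← sq_abs t]; ring

lemma abs_expKernel_add_expKernel_neg_sub_le_of_one_le_abs (hε : 0 < ε) {t : ℝ} (ht : 1 ≤ |t|) :
    |expKernel ε t + expKernel ε (-t) - 2 * quadKernel ε t| ≤ 6 := by
  have hpos := expKernel_le_three hε.le ht
  have hneg := expKernel_le_three hε.le (t := -t) (by rwa [abs_neg])
  have hquad : quadKernel ε t ≤ 2 := by
    rw [quadKernel, ← inv_inv (2 : ℝ)]
    exact inv_anti₀ (by norm_num) (by nlinarith [sq_abs t])
  have := expKernel_pos hε t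
  have := expKernel_pos hε (-t)
  have := quadKernel_pos hε t
  rw [abs_le]
  constructor <;> linarith

lemma abs_expKernel_add_expKernel_neg_sub_le (hε : 0 < ε) (t : ℝ) :
    |expKernel ε t + expKernel ε (-t) - 2 * quadKernel ε t| ≤ 6 := by
  rcases le_total |t| 1 with ht | ht
  · exact abs_expKernel_add_expKernel_neg_sub_le_of_abs_le_one hε ht
  · exact abs_expKernel_add_expKernel_neg_sub_le_of_one_le_abs hε ht

lemma quadKernel_eq (hε : 0 < ε) (t : ℝ) :
    quadKernel ε t = ε⁻¹ * (1 + (t / √(2 * ε)) ^ 2)⁻¹ := by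
  have : 0 < 2 * ε := by positivity
  rw [quadKernel, div_pow, sq_sqrt this.le, ← mul_inv]
  congr 1
  field_simp
  ring

lemma integrable_quadKernel (hε : 0 < ε) : Integrable (quadKernel ε) := by
  simp_rw [funext (quadKernel_eq hε)]
  exact (integrable_inv_one_add_sq.comp_div (by positivity)).const_mul _

lemma integral_quadKernel (hε : 0 < ε) :
    ∫ t, quadKernel ε t = √2 * π * ε ^ (-(1 / 2) : ℝ) := by
  simp_rw [quadKernel_eq hε]
  rw [integral_const_mul, Measure.integral_comp_div (fun u => (1 + u ^ 2)⁻¹),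
    integral_univ_inv_one_add_sq, smul_eq_mul, abs_of_pos (by positivity), sqrt_mul zero_le_two,
    rpow_neg hε.le, ← sqrt_eq_rpow]
  have := mul_self_sqrt hε.le
  have : 0 < √ε := sqrt_pos.2 hε
  field_simp
  linarith

end Kernels

lemma integral_Ioi_comp_sub_right {E : Type*} [NormedAddCommGroup E] [NormedSpace ℝ E]
    (f : ℝ → E) (a b : ℝ) : ∫ x in Ioi a, f (x - b) = ∫ x in Ioi (a - b), f x := by
  have := (measurePreserving_sub_right volume b).setIntegral_preimage_emb
    (measurableEmbedding_subRight b) f (Ioi (a - b))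
  rwa [preimage_sub_const_Ioi, sub_add_cancel] at this

section Tail
variable {f : ℝ → ℝ} {L c : ℝ}

lemma integrableOn_Ioi_of_norm_le_div_sq (hL : 0 < L)
    (hf : AEStronglyMeasurable f (volume.restrict (Ioi L)))
    (hbound : ∀ t ∈ Ioi L, ‖f t‖ ≤ c / t ^ 2) : IntegrableOn f (Ioi L) := by
  refine Integrable.mono'
    ((integrableOn_Ioi_rpow_of_lt (by norm_num : (-2 : ℝ) < -1) hL).const_mul c) hf ?_
  filter_upwards [ae_restrict_mem measurableSet_Ioi] with t ht
  rw [rpow_neg (hL.trans ht).le, rpow_two, ← div_eq_mul_inv]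
  exact hbound t ht

lemma norm_integral_Ioi_le_of_norm_le_div_sq (hL : 0 < L)
    (hbound : ∀ t ∈ Ioi L, ‖f t‖ ≤ c / t ^ 2) : ‖∫ t in Ioi L, f t‖ ≤ c / L := by
  have hint := (integrableOn_Ioi_rpow_of_lt (by norm_num : (-2 : ℝ) < -1) hL).const_mul c
  refine (norm_integral_le_of_norm_le hint ?_).trans_eq ?_
  · filter_upwards [ae_restrict_mem measurableSet_Ioi] with t ht
    rw [rpow_neg (hL.trans ht).le, rpow_two, ← div_eq_mul_inv]
    exact hbound t ht
  · rw [integral_const_mul, integral_Ioi_rpow_of_lt (by norm_num) hL]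
    norm_num [rpow_neg_one]
    field_simp

end Tail

lemma integral_neg_self_eq_integral_add_comp_neg {E : Type*} [NormedAddCommGroup E]
    [NormedSpace ℝ E] {f : ℝ → E} (hf : Continuous f) (a : ℝ) :
    ∫ x in -a..a, f x = ∫ x in 0..a, (f x + f (-x)) := by
  rw [← intervalIntegral.integral_add_adjacent_intervals (hf.intervalIntegrable (-a) 0)
      (hf.intervalIntegrable 0 a),
    intervalIntegral.integral_add (hf.intervalIntegrable 0 a)
      ((show Continuous fun x => f (-x) by fun_prop).intervalIntegrable 0 a),
    intervalIntegral.integral_comp_neg, neg_zero, add_comm]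

lemma abs_intervalIntegral_expKernel_sub_quadKernel_le {ε : ℝ} (hε : 0 < ε) {L : ℝ} (hL : 0 ≤ L) :
    |(∫ t in -L..L, expKernel ε t) - ∫ t in -L..L, quadKernel ε t| ≤ 6 * L := by
  have hφ := continuous_expKernel hε
  have hψ := continuous_quadKernel hε
  rw [← intervalIntegral.integral_sub (hφ.intervalIntegrable (-L) L)
      (hψ.intervalIntegrable (-L) L),
    integral_neg_self_eq_integral_add_comp_neg
      (f := fun t => expKernel ε t - quadKernel ε t) (hφ.sub hψ), ← norm_eq_abs]
  refine (intervalIntegral.norm_integral_le_of_norm_le_const (C := 6) fun t _ => ?_).trans_eq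
    (by rw [sub_zero, abs_of_nonneg hL])
  rw [quadKernel_neg, norm_eq_abs]
  convert abs_expKernel_add_expKernel_neg_sub_le hε t using 2
  ring

lemma abs_integral_Ioi_expKernel_sub_integral_quadKernel_le {ε L : ℝ} (hε : 0 < ε) (hL : 0 < L) :
    |(∫ t in Ioi (-L), expKernel ε t) - ∫ t, quadKernel ε t| ≤ 6 * L + 6 / L := by
  have hφ := continuous_expKernel hε
  have hψint := integrable_quadKernel hε
  have hφtail : ∀ t ∈ Ioi L, ‖expKernel ε t‖ ≤ 2 / t ^ 2 := fun t ht => by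
    rw [norm_of_nonneg (expKernel_pos hε t).le]
    exact expKernel_le_two_div_sq hε.le (hL.trans ht)
  have hψtail : ∀ t ∈ Ioi L, ‖quadKernel ε t‖ ≤ 2 / t ^ 2 := fun t ht => by
    rw [norm_of_nonneg (quadKernel_pos hε t).le]
    exact quadKernel_le_two_div_sq hε.le (hL.trans ht)
  have hφsplit : ∫ t in Ioi (-L), expKernel ε t
      = (∫ t in -L..L, expKernel ε t) + ∫ t in Ioi L, expKernel ε t :=
    (intervalIntegral.integral_interval_add_Ioi' (hφ.intervalIntegrable (-L) L)
      (integrableOn_Ioi_of_norm_le_div_sq hL hφ.aestronglyMeasurable hφtail)).symm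
  have hψsplit : ∫ t, quadKernel ε t = (∫ t in Iic (-L), quadKernel ε t)
      + ((∫ t in -L..L, quadKernel ε t) + ∫ t in Ioi L, quadKernel ε t) := by
    rw [intervalIntegral.integral_interval_add_Ioi hψint.integrableOn hψint.integrableOn,
      intervalIntegral.integral_Iic_add_Ioi hψint.integrableOn hψint.integrableOn]
  have hψleft : ∫ t in Iic (-L), quadKernel ε t = ∫ t in Ioi L, quadKernel ε t := by
    simp_rw [← integral_comp_neg_Ioi, quadKernel_neg]
  have hmid := abs_intervalIntegral_expKernel_sub_quadKernel_le hε hL.le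
  have hφY := norm_integral_Ioi_le_of_norm_le_div_sq hL hφtail
  have hψY := norm_integral_Ioi_le_of_norm_le_div_sq hL hψtail
  rw [norm_eq_abs] at hφY hψY
  rw [hφsplit, hψsplit, hψleft, abs_le]
  obtain ⟨hmid₁, hmid₂⟩ := abs_le.1 hmid
  obtain ⟨hφY₁, hφY₂⟩ := abs_le.1 hφY
  obtain ⟨hψY₁, hψY₂⟩ := abs_le.1 hψY
  have : 6 / L = 3 * (2 / L) := by ring
  constructor <;> linarith

lemma integral_Ioi_one_div_eq_integral_expKernel {μ : ℝ} (hμ : 0 < μ) (M : ℝ) :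
    ∫ x in Ioi 0, 1 / (exp x / μ - x + M - 1)
      = ∫ t in Ioi (-log μ), expKernel (M - log μ) t := by
  rw [← zero_sub, ← integral_Ioi_comp_sub_right]
  refine setIntegral_congr_fun measurableSet_Ioi fun x _ => ?_
  rw [expKernel, exp_sub, exp_log hμ, one_div]
  ring_nf

theorem integral_asymptotic (M : ℝ) (hM : 0 < M) :
    ∃ K δ : ℝ, 0 < δ ∧ ∀ μ : ℝ, Real.exp M - δ < μ → μ < Real.exp M →
      |(∫ x in Set.Ioi (0 : ℝ), 1 / (Real.exp x / μ - x + M - 1))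
          - Real.sqrt 2 * Real.pi * (M - Real.log μ) ^ (-(1 / 2) : ℝ)| ≤ K := by
  refine ⟨6 * M + 12 / M, exp M - exp (M / 2), by simpa using exp_lt_exp.2 (half_lt_self hM), ?_⟩
  intro μ hμ₁ hμ₂
  have hμ : 0 < μ := (exp_pos _).trans (by linarith)
  have hL₁ : M / 2 < log μ := (lt_log_iff_exp_lt hμ).2 (by linarith)
  have hL₂ : log μ < M := (log_lt_iff_lt_exp hμ).2 hμ₂
  have hε : 0 < M - log μ := sub_pos.2 hL₂
  rw [integral_Ioi_one_div_eq_integral_expKernel hμ, ← integral_quadKernel hε]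
  calc _ ≤ 6 * log μ + 6 / log μ :=
        abs_integral_Ioi_expKernel_sub_integral_quadKernel_le hε (by linarith)
    _ ≤ 6 * M + 12 / M := by
        have : 6 / log μ ≤ 12 / M := by
          rw [div_le_div_iff₀ (by linarith) hM]; linarith
        linarith
end
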